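/- Define α on points (q,p,z,t) ∈ ℝ⁴ and covectors (ξ_q,ξ_p,ξ_z,ξ_t) ∈ ℝ⁴ (wherever t ≠ 0 and t − ξ_z/2 ≠ 0) by α(q,p,z,t,ξ_q,ξ_p,ξ_z,ξ_t) = ( q − ξ_p/(2t), (t·p + ξ_q/2)/(t − ξ_z/2), z + ξ_t/2 − p·ξ_p/(2t), t − ξ_z/2 ). Then α is equivariant with respect to the lifted scaling action: for every λ ≠ 0, α(q, p, z, λt, λξ_q, λξ_p, λξ_z, ξ_t) = h_λ( α(q,p,z,t,ξ_q,ξ_p,ξ_z,ξ_t) ), where h_λ(q,p,z,t) := (q,p,z,λt). -/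
import Mathlib

/-- The source map of the homogeneous symplectic bi-realization for the
Poissonized contact structure. -/
noncomputable def alphaMap (q p z t ξq ξp ξz ξt : ℝ) : ℝ × ℝ × ℝ × ℝ :=
  (q - ξp / (2 * t), (t * p + ξq / 2) / (t - ξz / 2),
   z + ξt / 2 - p * ξp / (2 * t), t - ξz / 2)

/-- The scaling action `h_λ(q,p,z,t) = (q,p,z,λt)`. -/
def hScale (l : ℝ) (P : ℝ × ℝ × ℝ × ℝ) : ℝ × ℝ × ℝ × ℝ :=
  (P.1, P.2.1, P.2.2.1, l * P.2.2.2)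

/-- Equivariance of `α` with respect to the lifted scaling action:
`α ∘ T*h_λ = h_λ ∘ α`, where `T*h_λ` sends `(q,p,z,t,ξ_q,ξ_p,ξ_z,ξ_t)` to
`(q,p,z,λt,λξ_q,λξ_p,λξ_z,ξ_t)`. -/
theorem stmt_7 :
    ∀ (l q p z t ξq ξp ξz ξt : ℝ), l ≠ 0 → t ≠ 0 → t - ξz / 2 ≠ 0 →
      alphaMap q p z (l * t) (l * ξq) (l * ξp) (l * ξz) ξt
        = hScale l (alphaMap q p z t ξq ξp ξz ξt) := by
  intro l q p z t ξq ξp ξz ξt hl ht h2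
  simp only [alphaMap, hScale, Prod.mk.injEq]
  have e2 : (l * t * p + l * ξq / 2) / (l * t - l * ξz / 2)
      = (t * p + ξq / 2) / (t - ξz / 2) := by
    have : l * t * p + l * ξq / 2 = l * (t * p + ξq / 2) := by ring
    rw [this, show l * t - l * ξz / 2 = l * (t - ξz / 2) by ring,
      mul_div_mul_left _ _ hl]
  refine ⟨?_, e2, ?_, ?_⟩ <;> field_simp <;> ring
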